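/- arXiv:0809.1516 — 2 statements merged into one kernel-verified Lean document; each statement's English description precedes it below -/
import Mathlib

section
/- For a standard Gaussian random variable Z ~ N(0,1) and any a ∈ ℝ, any λ ≥ 0: 1 + E[(Z + a)² ∧ λ²] − 2 P(|Z + a| ≤ λ) ≤ (1 + λ²)(e^{−λ²/2} + a²). -/
/-!
The left-hand side is the risk `r(l, a)` of soft thresholding at level `l` for the observation
`Z + a`. Writing `min ((z + a)², l²) = l² - (l² - (z + a)²)` on `|z + a| ≤ l`, the only integral
left is that of a quadratic against the Gaussian density over an interval, which integrates in
closed form (`softThresholdRisk`). Differentiating the closed form gives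
`∂r/∂a = 2a P(|Z + a| ≤ l)`, so `r(l, a) - a²` decreases in `|a|` and `r(l, a) ≤ r(l, 0) + a²`.
Finally `r(l, 0) ≤ (1 + l²) P(|Z| > l)`, and `P(Z > l) ≤ e^{-l²/2} / 2` because
`φ(s + l) ≤ e^{-l²/2} φ(s)` for `s, l ≥ 0`.
-/

open MeasureTheory ProbabilityTheory Real Set
open scoped NNReal

lemma hasDerivAt_intervalIntegral_comp {E : Type*} [NormedAddCommGroup E] [NormedSpace ℝ E]
    [CompleteSpace E] {f : ℝ → E} (hf : Continuous f) {u v : ℝ → ℝ} {u' v' x : ℝ}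
    (hu : HasDerivAt u u' x) (hv : HasDerivAt v v' x) :
    HasDerivAt (fun y ↦ ∫ t in u y..v y, f t) (v' • f (v x) - u' • f (u x)) x := by
  have hF (z : ℝ) : HasDerivAt (fun w ↦ ∫ t in (0 : ℝ)..w, f t) (f z) z :=
    (hf.integral_hasStrictDerivAt 0 z).hasDerivAt
  have hsplit : (fun y ↦ ∫ t in u y..v y, f t)
      = fun y ↦ (∫ t in (0 : ℝ)..v y, f t) - ∫ t in (0 : ℝ)..u y, f t := by
    funext y
    rw [intervalIntegral.integral_interval_sub_left (hf.intervalIntegrable _ _)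
      (hf.intervalIntegrable _ _)]
  rw [hsplit]
  exact ((hF (v x)).scomp x hv).sub ((hF (u x)).scomp x hu)

lemma setOf_abs_add_le_eq_Icc (a l : ℝ) : {z : ℝ | |z + a| ≤ l} = Icc (-l - a) (l - a) := by
  ext z
  simp only [mem_ofPred_eq, mem_Icc, abs_le]
  constructor <;> rintro ⟨h₁, h₂⟩ <;> constructor <;> linarith

lemma integral_min_sq_sub_two_mul_measureReal (μ : Measure ℝ) [IsProbabilityMeasure μ] (a : ℝ)
    {l : ℝ} (hl : 0 ≤ l) :
    ∫ z, min ((z + a) ^ 2) (l ^ 2) ∂μ - 2 * μ.real {z | |z + a| ≤ l}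
      = l ^ 2 - ∫ z in {z | |z + a| ≤ l}, (l ^ 2 + 2 - (z + a) ^ 2) ∂μ := by
  set S := {z : ℝ | |z + a| ≤ l}
  have hmin (z : ℝ) :
      min ((z + a) ^ 2) (l ^ 2) = l ^ 2 - S.indicator (fun z ↦ l ^ 2 - (z + a) ^ 2) z := by
    by_cases hz : z ∈ S
    · rw [indicator_of_mem hz, min_eq_left (sq_le_sq.2 (by rwa [abs_of_nonneg hl]))]
      ring
    · rw [indicator_of_notMem hz, min_eq_right (sq_le_sq.2 ?_), sub_zero]
      rw [abs_of_nonneg hl]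
      exact (not_le.1 hz).le
  have hS_eq : S = Icc (-l - a) (l - a) := setOf_abs_add_le_eq_Icc a l
  have hS : MeasurableSet S := hS_eq ▸ measurableSet_Icc
  have hint (c : ℝ) : IntegrableOn (fun z ↦ c - (z + a) ^ 2) S μ := by
    rw [hS_eq]
    exact (by fun_prop : Continuous fun z : ℝ ↦ c - (z + a) ^ 2).integrableOn_Icc
  have hsplit : ∫ z in S, (l ^ 2 + 2 - (z + a) ^ 2) ∂μ
      = ∫ z in S, (l ^ 2 - (z + a) ^ 2) ∂μ + 2 * μ.real S := by
    rw [mul_comm, ← smul_eq_mul, ← setIntegral_const,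
      ← integral_add (hint _) (integrableOn_const ..)]
    congr 1
    funext z
    ring
  simp_rw [hmin]
  rw [integral_sub (integrable_const _) ((hint _).integrable_indicator hS), integral_indicator hS,
    integral_const, probReal_univ, one_smul, hsplit]
  ring

namespace ProbabilityTheory

lemma gaussianPDFReal_neg (μ : ℝ) (v : ℝ≥0) (x : ℝ) :
    gaussianPDFReal μ v (-x) = gaussianPDFReal (-μ) v x := by
  simp only [gaussianPDFReal]
  ring_nf

lemma hasDerivAt_gaussianPDFReal (μ : ℝ) (v : ℝ≥0) (x : ℝ) :
    HasDerivAt (gaussianPDFReal μ v) (-((x - μ) / v) * gaussianPDFReal μ v x) x := by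
  have hq : HasDerivAt (fun y ↦ -(y - μ) ^ 2 / (2 * v)) (-((x - μ) / v)) x :=
    ((((hasDerivAt_id' x).sub_const μ).fun_pow 2).fun_neg.div_const (2 * (v : ℝ))).congr_deriv
      (by norm_num; ring)
  rw [gaussianPDFReal_def]
  exact (hq.exp.const_mul (√(2 * π * v))⁻¹).congr_deriv (by ring)

lemma continuous_gaussianPDFReal (μ : ℝ) (v : ℝ≥0) : Continuous (gaussianPDFReal μ v) :=
  continuous_iff_continuousAt.2 fun x ↦ (hasDerivAt_gaussianPDFReal μ v x).continuousAt

lemma setIntegral_gaussianReal_eq_setIntegral_mul {μ : ℝ} {v : ℝ≥0} (hv : v ≠ 0) (f : ℝ → ℝ)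
    {s : Set ℝ} (hs : MeasurableSet s) :
    ∫ x in s, f x ∂gaussianReal μ v = ∫ x in s, gaussianPDFReal μ v x * f x := by
  rw [gaussianReal_of_var_ne_zero μ hv, restrict_withDensity hs,
    integral_withDensity_eq_integral_toReal_smul (measurable_gaussianPDF μ v)
      (ae_of_all _ fun _ ↦ gaussianPDF_lt_top)]
  simp [toReal_gaussianPDF]

lemma intervalIntegral_gaussianPDFReal_le_one (μ : ℝ) {v : ℝ≥0} (hv : v ≠ 0) (c d : ℝ) :
    ∫ t in c..d, gaussianPDFReal μ v t ≤ 1 := by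
  rcases le_total c d with hcd | hdc
  · rw [intervalIntegral.integral_of_le hcd, ← integral_gaussianPDFReal_eq_one μ hv]
    exact setIntegral_le_integral (integrable_gaussianPDFReal μ v)
      (ae_of_all _ (gaussianPDFReal_nonneg μ v))
  · rw [intervalIntegral.integral_symm]
    linarith [intervalIntegral.integral_nonneg (μ := volume) hdc
      fun t _ ↦ gaussianPDFReal_nonneg μ v t]

end ProbabilityTheory

section StandardGaussian

local notation "φ" => gaussianPDFReal 0 1

lemma gaussianPDFReal_neg_sub (x y : ℝ) : φ (-x - y) = φ (x + y) := by
  rw [← neg_add', gaussianPDFReal_neg, neg_zero]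

lemma one_sub_intervalIntegral_gaussianPDFReal (l : ℝ) :
    1 - ∫ t in -l..l, φ t = 2 * ∫ t in Ioi l, φ t := by
  have hsymm : ∫ t in Iic (-l), φ t = ∫ t in Ioi l, φ t := by
    simpa [gaussianPDFReal_neg] using integral_comp_neg_Iic (-l) φ
  have hφ := integrable_gaussianPDFReal 0 1
  have htotal := intervalIntegral.integral_Iic_add_Ioi (b := l) hφ.integrableOn hφ.integrableOn
  have hinterval :=
    intervalIntegral.integral_Iic_sub_Iic (a := -l) (b := l) hφ.integrableOn hφ.integrableOn
  rw [integral_gaussianPDFReal_eq_one 0 one_ne_zero] at htotal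
  linarith

lemma integral_Ioi_zero_gaussianPDFReal : ∫ t in Ioi 0, φ t = 1 / 2 := by
  have h := one_sub_intervalIntegral_gaussianPDFReal 0
  rw [neg_zero, intervalIntegral.integral_same] at h
  linarith

lemma gaussianPDFReal_add_le {s l : ℝ} (hs : 0 ≤ s) (hl : 0 ≤ l) :
    φ (s + l) ≤ exp (-l ^ 2 / 2) * φ s := by
  simp only [gaussianPDFReal, NNReal.coe_one, mul_one, sub_zero]
  rw [mul_left_comm, ← exp_add]
  gcongr
  nlinarith [mul_nonneg hs hl]

lemma integral_Ioi_gaussianPDFReal_le {l : ℝ} (hl : 0 ≤ l) :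
    ∫ t in Ioi l, φ t ≤ exp (-l ^ 2 / 2) / 2 := by
  have hφ := integrable_gaussianPDFReal 0 1
  calc ∫ t in Ioi l, φ t = ∫ s in Ioi 0, φ (s + l) := by
        rw [← (measurePreserving_add_right volume l).setIntegral_preimage_emb
          (measurableEmbedding_addRight l), preimage_add_const_Ioi, sub_self]
    _ ≤ ∫ s in Ioi 0, exp (-l ^ 2 / 2) * φ s :=
        setIntegral_mono_on (hφ.comp_add_right l).integrableOn (hφ.const_mul _).integrableOn
          measurableSet_Ioi fun s hs ↦ gaussianPDFReal_add_le hs.le hl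
    _ = exp (-l ^ 2 / 2) / 2 := by
        rw [integral_const_mul, integral_Ioi_zero_gaussianPDFReal]
        ring

lemma intervalIntegral_gaussianPDFReal_mul_sub_sq (k a c d : ℝ) :
    ∫ z in c..d, φ z * (k - (z + a) ^ 2)
      = (k - 1 - a ^ 2) * (∫ z in c..d, φ z) + (d + 2 * a) * φ d - (c + 2 * a) * φ c := by
  have hφ := continuous_gaussianPDFReal 0 1
  have hprimitive (z : ℝ) : HasDerivAt
      (fun y ↦ (k - 1 - a ^ 2) * (∫ t in c..y, φ t) + (y + 2 * a) * φ y)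
      (φ z * (k - (z + a) ^ 2)) z := by
    have h := ((hφ.integral_hasStrictDerivAt c z).hasDerivAt.const_mul (k - 1 - a ^ 2)).add
      (((hasDerivAt_id' z).add_const (2 * a)).mul (hasDerivAt_gaussianPDFReal 0 1 z))
    refine h.congr_deriv ?_
    simp only [NNReal.coe_one, sub_zero, div_one]
    ring
  rw [intervalIntegral.integral_eq_sub_of_hasDerivAt (fun z _ ↦ hprimitive z)
    ((hφ.mul (by fun_prop)).intervalIntegrable c d), intervalIntegral.integral_same]
  ring

/-- Donoho–Johnstone's closed form of the risk `E (η(Z + a) - a)²` of soft thresholding `η` at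
level `l`, for `Z ~ N(0, 1)`. -/
noncomputable def softThresholdRisk (l a : ℝ) : ℝ :=
  1 + l ^ 2 + (a ^ 2 - l ^ 2 - 1) * (∫ t in (-l - a)..(l - a), φ t)
    - (l - a) * φ (l + a) - (l + a) * φ (l - a)

lemma softThresholdRisk_eq (a : ℝ) {l : ℝ} (hl : 0 ≤ l) :
    1 + (∫ z, min ((z + a) ^ 2) (l ^ 2) ∂(gaussianReal 0 1))
      - 2 * ((gaussianReal 0 1) {z | |z + a| ≤ l}).toReal = softThresholdRisk l a := by
  have h := integral_min_sq_sub_two_mul_measureReal (gaussianReal 0 1) a hl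
  rw [setIntegral_gaussianReal_eq_setIntegral_mul one_ne_zero _
      (setOf_abs_add_le_eq_Icc a l ▸ measurableSet_Icc), setOf_abs_add_le_eq_Icc,
    integral_Icc_eq_integral_Ioc, ← intervalIntegral.integral_of_le (by linarith),
    intervalIntegral_gaussianPDFReal_mul_sub_sq, measureReal_def] at h
  rw [softThresholdRisk, setOf_abs_add_le_eq_Icc, ← gaussianPDFReal_neg_sub]
  linear_combination h

lemma hasDerivAt_softThresholdRisk (l a : ℝ) :
    HasDerivAt (softThresholdRisk l) (2 * a * ∫ t in (-l - a)..(l - a), φ t) a := by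
  have hφ (x : ℝ) : HasDerivAt φ (-x * φ x) x := by
    simpa using hasDerivAt_gaussianPDFReal 0 1 x
  have hlsub : HasDerivAt (fun b ↦ l - b) (-1) a := (hasDerivAt_id' a).const_sub l
  have hladd : HasDerivAt (fun b ↦ l + b) 1 a := (hasDerivAt_id' a).const_add l
  have hmass := hasDerivAt_intervalIntegral_comp (continuous_gaussianPDFReal 0 1)
    ((hasDerivAt_id' a).const_sub (-l)) hlsub
  have h := (((((hasDerivAt_id' a).fun_pow 2).sub_const (l ^ 2)).sub_const 1).fun_mul hmass
    |>.const_add (1 + l ^ 2)).fun_sub (hlsub.fun_mul ((hφ (l + a)).comp a hladd))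
    |>.fun_sub (hladd.fun_mul ((hφ (l - a)).comp a hlsub))
  refine h.congr_deriv ?_
  rw [gaussianPDFReal_neg_sub]
  simp only [Function.comp_apply, smul_eq_mul]
  ring

lemma softThresholdRisk_le_add_sq (l a : ℝ) :
    softThresholdRisk l a ≤ softThresholdRisk l 0 + a ^ 2 := by
  set F := fun b ↦ softThresholdRisk l b - b ^ 2
  have hF (b : ℝ) :
      HasDerivAt F (2 * b * ((∫ t in (-l - b)..(l - b), φ t) - 1)) b := by
    refine ((hasDerivAt_softThresholdRisk l b).fun_sub
      ((hasDerivAt_id' b).fun_pow 2)).congr_deriv ?_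
    norm_num
    ring
  have hmass (b : ℝ) := intervalIntegral_gaussianPDFReal_le_one 0 one_ne_zero (-l - b) (l - b)
  have hFcont : Continuous F := continuous_iff_continuousAt.2 fun b ↦ (hF b).continuousAt
  suffices F a ≤ F 0 by simp only [F] at this; linarith
  rcases le_total 0 a with ha | ha
  · refine antitoneOn_of_hasDerivWithinAt_nonpos (convex_Ici 0) hFcont.continuousOn
      (fun b _ ↦ (hF b).hasDerivWithinAt) (fun b hb ↦ ?_) self_mem_Ici ha ha
    rw [interior_Ici, mem_Ioi] at hb
    nlinarith [hmass b]
  · refine monotoneOn_of_hasDerivWithinAt_nonneg (convex_Iic 0) hFcont.continuousOn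
      (fun b _ ↦ (hF b).hasDerivWithinAt) (fun b hb ↦ ?_) ha self_mem_Iic ha
    rw [interior_Iic, mem_Iio] at hb
    nlinarith [hmass b]

lemma softThresholdRisk_zero_le {l : ℝ} (hl : 0 ≤ l) :
    softThresholdRisk l 0 ≤ (1 + l ^ 2) * exp (-l ^ 2 / 2) := by
  have htail : 1 - ∫ t in -l..l, φ t ≤ exp (-l ^ 2 / 2) := by
    rw [one_sub_intervalIntegral_gaussianPDFReal]
    linarith [integral_Ioi_gaussianPDFReal_le hl]
  have hφ : 0 ≤ l * φ l := mul_nonneg hl (gaussianPDFReal_nonneg 0 1 l)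
  simp only [softThresholdRisk, sub_zero, add_zero]
  nlinarith [mul_le_mul_of_nonneg_left htail (by positivity : (0 : ℝ) ≤ 1 + l ^ 2)]

end StandardGaussian

/-- Donoho–Johnstone pointwise bound: for `Z ~ N(0,1)`, `a ∈ ℝ`, `λ ≥ 0`,
`1 + E[(Z+a)² ∧ λ²] − 2 P(|Z+a| ≤ λ) ≤ (1+λ²)(e^{−λ²/2} + a²)`. -/
theorem soft_threshold_pointwise_risk_bound (a l : ℝ) (hl : 0 ≤ l) :
    1 + (∫ z, min ((z + a) ^ 2) (l ^ 2) ∂(gaussianReal 0 1))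
      - 2 * ((gaussianReal 0 1) {z | |z + a| ≤ l}).toReal
    ≤ (1 + l ^ 2) * (Real.exp (-l ^ 2 / 2) + a ^ 2) := by
  rw [softThresholdRisk_eq a hl]
  nlinarith [softThresholdRisk_le_add_sq l a, softThresholdRisk_zero_le hl,
    mul_nonneg (sq_nonneg l) (sq_nonneg a)]
end

section
/- Let Z ~ N(0,1) and a, λ ∈ ℝ with λ ≥ 0. Then 1 − P(|Z + a| ≤ λ) ≤ e^{−λ²/2} + a², i.e. P(|Z + a| > λ) ≤ e^{−λ²/2} + a². -/
open MeasureTheory ProbabilityTheory Real Set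

/-- The standard normal density. -/
noncomputable def gpdf (z : ℝ) : ℝ := (Real.sqrt (2 * π))⁻¹ * Real.exp (-z ^ 2 / 2)

lemma gpdf_eq : gaussianPDFReal 0 1 = gpdf := by
  funext x
  simp [gaussianPDFReal, gpdf]

lemma gpdf_nonneg (z : ℝ) : 0 ≤ gpdf z := by
  exact mul_nonneg (inv_nonneg.mpr (Real.sqrt_nonneg _)) (Real.exp_pos _).le

lemma gpdf_even (z : ℝ) : gpdf (-z) = gpdf z := by simp [gpdf]

lemma integrable_gpdf : Integrable gpdf := gpdf_eq ▸ integrable_gaussianPDFReal 0 1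

lemma continuous_gpdf : Continuous gpdf := by
  unfold gpdf; fun_prop

/-- Upper tail of the standard normal. -/
noncomputable def Qtail (t : ℝ) : ℝ := ∫ z in Ioi t, gpdf z

lemma shift_Ioi (f : ℝ → ℝ) (c d : ℝ) :
    ∫ x in Ioi c, f (x + d) = ∫ x in Ioi (c + d), f x := by
  have A : MeasurableEmbedding (fun x : ℝ => x + d) :=
    (Homeomorph.addRight d).measurableEmbedding
  have h := A.setIntegral_map (μ := (volume : Measure ℝ)) f (Ioi (c + d))
  rw [map_add_right_eq_self volume d] at h
  have hpre : (fun x : ℝ => x + d) ⁻¹' (Ioi (c + d)) = Ioi c := by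
    ext x; simp
  rw [hpre] at h
  exact h.symm

lemma Qtail_split {t s : ℝ} (h : t ≤ s) :
    Qtail t = (∫ z in Ioc t s, gpdf z) + Qtail s := by
  rw [Qtail, Qtail, ← Ioc_union_Ioi_eq_Ioi h,
    setIntegral_union Ioc_disjoint_Ioi_same measurableSet_Ioi
      integrable_gpdf.integrableOn integrable_gpdf.integrableOn]

lemma sqrt_two_pi_pos : 0 < Real.sqrt (2 * π) :=
  Real.sqrt_pos.mpr (by positivity)

lemma two_le_sqrt_two_pi : (2 : ℝ) ≤ Real.sqrt (2 * π) := by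
  have h4 : (4 : ℝ) ≤ 2 * π := by nlinarith [Real.pi_gt_three]
  have : Real.sqrt 4 ≤ Real.sqrt (2 * π) := Real.sqrt_le_sqrt h4
  have h2 : Real.sqrt 4 = 2 := by
    rw [show (4:ℝ) = 2 ^ 2 by norm_num, Real.sqrt_sq (by norm_num : (0:ℝ) ≤ 2)]
  linarith

lemma Qtail_le {l : ℝ} (hl : 0 ≤ l) : Qtail l ≤ Real.exp (-l ^ 2 / 2) / 2 := by
  have hsp := sqrt_two_pi_pos
  have hint2 : Integrable (fun z : ℝ => Real.exp (-(1/2) * (z - l) ^ 2)) := by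
    have := integrable_exp_neg_mul_sq (by norm_num : (0:ℝ) < 1/2)
    exact this.comp_sub_right l
  have step1 : Qtail l ≤ ∫ z in Ioi l,
      (Real.sqrt (2 * π))⁻¹ * Real.exp (-l ^ 2 / 2) * Real.exp (-(1/2) * (z - l) ^ 2) := by
    apply setIntegral_mono_on integrable_gpdf.integrableOn
      (((hint2.const_mul _)).integrableOn) measurableSet_Ioi
    intro z hz
    have hz' : l < z := hz
    rw [gpdf, mul_assoc]
    apply mul_le_mul_of_nonneg_left _ (by positivity)
    rw [← Real.exp_add]
    apply Real.exp_le_exp.mpr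
    nlinarith
  have step2 : ∫ z in Ioi l,
      (Real.sqrt (2 * π))⁻¹ * Real.exp (-l ^ 2 / 2) * Real.exp (-(1/2) * (z - l) ^ 2)
      = (Real.sqrt (2 * π))⁻¹ * Real.exp (-l ^ 2 / 2) * (Real.sqrt (2 * π) / 2) := by
    rw [MeasureTheory.integral_const_mul]
    congr 1
    have h := shift_Ioi (fun u => Real.exp (-(1/2) * u ^ 2)) l (-l)
    simp only [add_neg_cancel] at h
    have h' : ∫ z in Ioi l, Real.exp (-(1/2) * (z - l) ^ 2)
        = ∫ x in Ioi l, (fun u => Real.exp (-(1/2) * u ^ 2)) (x + -l) := by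
      simp only [sub_eq_add_neg]
    rw [h', h]
    have := integral_gaussian_Ioi (1/2)
    rw [this]
    congr 1
    rw [show π / (1/2) = 2 * π by ring]
  have hfin : (Real.sqrt (2 * π))⁻¹ * Real.exp (-l ^ 2 / 2) * (Real.sqrt (2 * π) / 2)
      = Real.exp (-l ^ 2 / 2) / 2 := by
    field_simp
  calc Qtail l ≤ _ := step1
    _ = _ := step2
    _ = _ := hfin

lemma pointwise_bound {l u : ℝ} (hl : 0 ≤ l) (hu0 : 0 ≤ u) (hu1 : u ≤ 1) :
    gpdf (l - u) - gpdf (l + u) ≤ 2 * u := by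
  have hsp := sqrt_two_pi_pos
  have hs2 := two_le_sqrt_two_pi
  set c := (Real.sqrt (2 * π))⁻¹ with hc
  have hc0 : 0 ≤ c := by positivity
  have hc2 : c * 2 ≤ 1 := by
    rw [hc]
    rw [inv_mul_le_iff₀ hsp]
    linarith
  have hexp : Real.exp (-(l + u) ^ 2 / 2)
      = Real.exp (-(l - u) ^ 2 / 2) * Real.exp (-(2 * l * u)) := by
    rw [← Real.exp_add]; congr 1; ring
  have h1 : gpdf (l - u) - gpdf (l + u)
      = c * Real.exp (-(l - u) ^ 2 / 2) * (1 - Real.exp (-(2 * l * u))) := by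
    simp only [gpdf, ← hc]
    rw [hexp]; ring
  have h2 : 1 - Real.exp (-(2 * l * u)) ≤ 2 * l * u := by
    have := Real.add_one_le_exp (-(2 * l * u)); linarith
  have hE : (0:ℝ) < Real.exp (-(l - u) ^ 2 / 2) := Real.exp_pos _
  have h4 : l * Real.exp (-(l - u) ^ 2 / 2) ≤ 2 := by
    rcases le_total l u with h | h
    · have : Real.exp (-(l - u) ^ 2 / 2) ≤ 1 := by
        apply Real.exp_le_one_iff.mpr
        nlinarith
      nlinarith
    · set x := l - u with hx
      have hx0 : 0 ≤ x := by simp [hx]; linarith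
      have h5 : x ≤ Real.exp (x ^ 2 / 2) := by
        have := Real.add_one_le_exp (x ^ 2 / 2); nlinarith
      have hxe : x * Real.exp (-x ^ 2 / 2) ≤ 1 := by
        have hpos : (0:ℝ) < Real.exp (-x ^ 2 / 2) := Real.exp_pos _
        have : Real.exp (x ^ 2 / 2) * Real.exp (-x ^ 2 / 2) = 1 := by
          rw [← Real.exp_add]; rw [show x ^ 2 / 2 + -x ^ 2 / 2 = 0 by ring, Real.exp_zero]
        nlinarith
      have hle1 : Real.exp (-x ^ 2 / 2) ≤ 1 := by
        apply Real.exp_le_one_iff.mpr; nlinarith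
      have hxE : (0:ℝ) < Real.exp (-x ^ 2 / 2) := Real.exp_pos _
      have hue : u * Real.exp (-x ^ 2 / 2) ≤ 1 := by nlinarith
      have hsum : l * Real.exp (-x ^ 2 / 2)
          = x * Real.exp (-x ^ 2 / 2) + u * Real.exp (-x ^ 2 / 2) := by
        rw [hx]; ring
      calc l * Real.exp (-(l - u) ^ 2 / 2) = x * Real.exp (-x ^ 2 / 2) + u * Real.exp (-x ^ 2 / 2) := by
            rw [← hsum]
        _ ≤ 1 + 1 := add_le_add hxe hue
        _ = 2 := by norm_num
  rw [h1]
  calc c * Real.exp (-(l - u) ^ 2 / 2) * (1 - Real.exp (-(2 * l * u)))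
      ≤ c * Real.exp (-(l - u) ^ 2 / 2) * (2 * l * u) := by
        apply mul_le_mul_of_nonneg_left h2 (by positivity)
    _ = 2 * u * (c * (l * Real.exp (-(l - u) ^ 2 / 2))) := by ring
    _ ≤ 2 * u * (c * 2) := by
        apply mul_le_mul_of_nonneg_left _ (by positivity)
        exact mul_le_mul_of_nonneg_left h4 hc0
    _ ≤ 2 * u * 1 := by nlinarith
    _ = 2 * u := by ring

lemma key_ineq {l b : ℝ} (hl : 0 ≤ l) (hb0 : 0 ≤ b) (hb1 : b ≤ 1) :
    Qtail (l - b) + Qtail (l + b) ≤ Real.exp (-l ^ 2 / 2) + b ^ 2 := by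
  have h1 : Qtail (l - b) = (∫ z in Ioc (l - b) l, gpdf z) + Qtail l :=
    Qtail_split (by linarith)
  have h2 : Qtail l = (∫ z in Ioc l (l + b), gpdf z) + Qtail (l + b) :=
    Qtail_split (by linarith)
  have e1 : (∫ z in Ioc (l - b) l, gpdf z) = ∫ u in (0:ℝ)..b, gpdf (l - u) := by
    have h := intervalIntegral.integral_comp_sub_left (a := 0) (b := b) (fun z => gpdf z) l
    rw [h, intervalIntegral.integral_of_le (by linarith : l - b ≤ l - 0)]
    norm_num
  have e2 : (∫ z in Ioc l (l + b), gpdf z) = ∫ u in (0:ℝ)..b, gpdf (l + u) := by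
    have h := intervalIntegral.integral_comp_add_left (a := 0) (b := b) (fun z => gpdf z) l
    rw [h, intervalIntegral.integral_of_le (by linarith : l + 0 ≤ l + b)]
    norm_num
  have hi1 : IntervalIntegrable (fun u => gpdf (l - u)) volume 0 b :=
    (continuous_gpdf.comp (continuous_const.sub continuous_id)).intervalIntegrable _ _
  have hi2 : IntervalIntegrable (fun u => gpdf (l + u)) volume 0 b :=
    (continuous_gpdf.comp (continuous_const.add continuous_id)).intervalIntegrable _ _
  have hdiff : (∫ u in (0:ℝ)..b, gpdf (l - u)) - (∫ u in (0:ℝ)..b, gpdf (l + u))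
      = ∫ u in (0:ℝ)..b, (gpdf (l - u) - gpdf (l + u)) :=
    (intervalIntegral.integral_sub hi1 hi2).symm
  have hmono : (∫ u in (0:ℝ)..b, (gpdf (l - u) - gpdf (l + u)))
      ≤ ∫ u in (0:ℝ)..b, 2 * u := by
    apply intervalIntegral.integral_mono_on hb0 (hi1.sub hi2)
      ((continuous_const.mul continuous_id).intervalIntegrable _ _)
    intro u hu
    exact pointwise_bound hl hu.1 (le_trans hu.2 hb1)
  have hval : (∫ u in (0:ℝ)..b, 2 * u) = b ^ 2 := by
    rw [intervalIntegral.integral_const_mul]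
    simp only [integral_id]
    ring
  have hq := Qtail_le hl
  linarith [hmono, hval, hdiff, h1, h2, e1, e2, hq]

/-- Tail estimate: for `Z ~ N(0,1)`, all `a ∈ ℝ` and `λ ≥ 0`,
`P(|Z + a| > λ) ≤ e^{−λ²/2} + a²`. -/
theorem shifted_gaussian_tail_bound (a l : ℝ) (hl : 0 ≤ l) :
    ((gaussianReal 0 1) {z | l < |z + a|}).toReal
      ≤ Real.exp (-l ^ 2 / 2) + a ^ 2 := by
  rcases le_or_gt |a| 1 with hb1 | hb1
  swap
  · -- |a| > 1 : trivial since probability ≤ 1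
    have hP : ((gaussianReal 0 1) {z | l < |z + a|}).toReal ≤ 1 := by
      apply ENNReal.toReal_le_of_le_ofReal zero_le_one
      simpa using prob_le_one (μ := gaussianReal 0 1) (s := {z | l < |z + a|})
    have ha2 : 1 ≤ a ^ 2 := by nlinarith [sq_abs a, abs_nonneg a]
    have := Real.exp_pos (-l ^ 2 / 2)
    linarith
  have hset : {z : ℝ | l < |z + a|} = Iio (-l - a) ∪ Ioi (l - a) := by
    ext z
    simp only [mem_setOf_eq, mem_union, mem_Iio, mem_Ioi, lt_abs]
    constructor
    · rintro (h | h)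
      · right; linarith
      · left; linarith
    · rintro (h | h)
      · right; linarith
      · left; linarith
  have hdisj : Disjoint (Iio (-l - a)) (Ioi (l - a)) :=
    (Iio_disjoint_Ici (by linarith)).mono_right Ioi_subset_Ici_self
  rw [hset, gaussianReal_apply_eq_integral 0 one_ne_zero, gpdf_eq,
    ENNReal.toReal_ofReal (setIntegral_nonneg (measurableSet_Iio.union measurableSet_Ioi)
      fun z _ => gpdf_nonneg z),
    setIntegral_union hdisj measurableSet_Ioi
      integrable_gpdf.integrableOn integrable_gpdf.integrableOn]
  have hIio : ∫ z in Iio (-l - a), gpdf z = Qtail (l + a) := by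
    rw [setIntegral_congr_set Iio_ae_eq_Iic]
    have h := integral_comp_neg_Iic (-l - a) gpdf
    simp only [gpdf_even] at h
    have h2 : -(-l - a) = l + a := by ring
    rw [h2] at h
    exact h
  rw [hIio]
  show Qtail (l + a) + Qtail (l - a) ≤ _
  rcases abs_cases a with ⟨he, h0⟩ | ⟨he, h0⟩
  · have hkey := key_ineq hl h0 (he ▸ hb1)
    linarith
  · have hb0 : 0 ≤ -a := by linarith
    have hb1' : -a ≤ 1 := by rw [← he]; exact hb1
    have hkey := key_ineq hl hb0 hb1'
    simp only [sub_neg_eq_add, ← sub_eq_add_neg, neg_sq] at hkey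
    linarith
end
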